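/- Let X ∈ S_n and suppose G ∈ 𝕊^n satisfies λ_{n-1}(G) − λ_n(G) ≥ δ_X > 0. Let v_n be a unit eigenvector of G associated with λ_n(G). Then ⟨X − v_n v_nᵀ, G⟩ ≥ δ_X (1 − v_nᵀ X v_n) ≥ (δ_X/2) ‖X − v_n v_nᵀ‖_F². -/

import Mathlib

/-!
Expand `G = ∑ μᵢ uᵢuᵢᵀ` in an orthonormal eigenbasis. The gap makes the bottom eigenvalue `μ₀`
simple, so `vvᵀ = u₀u₀ᵀ`. The weights `pᵢ = uᵢᵀXuᵢ` are nonnegative and sum to `Tr X = 1`, hence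
`⟨X - vvᵀ, G⟩ = ∑ (μᵢ - μ₀) pᵢ ≥ δ (1 - p₀) = δ (1 - vᵀXv)`.
For the second inequality, `‖X - vvᵀ‖² = ‖X‖² - 2 vᵀXv + 1`, and `‖X‖² ≤ (Tr X)² = 1` because
`Xⱼₖ² ≤ Xⱼⱼ Xₖₖ` for `X ⪰ 0`.
-/

open Matrix
open scoped RealInnerProductSpace

noncomputable section

/-- Trace (Frobenius) inner product on real square matrices. -/
def tinner {n : ℕ} (A B : Matrix (Fin n) (Fin n) ℝ) : ℝ := ∑ i, ∑ j, A i j * B i j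

/-- Squared Frobenius norm. -/
def frobSq {n : ℕ} (A : Matrix (Fin n) (Fin n) ℝ) : ℝ := ∑ i, ∑ j, (A i j)^2

/-- Frobenius norm. -/
def frobNorm {n : ℕ} (A : Matrix (Fin n) (Fin n) ℝ) : ℝ := Real.sqrt (frobSq A)

/-- The spectrahedron: positive semidefinite matrices with unit trace. -/
def Spectra (n : ℕ) : Set (Matrix (Fin n) (Fin n) ℝ) :=
  {X | X.PosSemidef ∧ X.trace = 1}

/-- Eigenvalues of a symmetric matrix sorted in non-decreasing order, so that
`sortedEigs hA 0` is the smallest eigenvalue (λ_n in the paper's non-increasing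
convention), `sortedEigs hA 1` is the second smallest (λ_{n-1}), and in general
`sortedEigs hA i = λ_{n-i}`. -/
def sortedEigs {n : ℕ} {A : Matrix (Fin n) (Fin n) ℝ} (hA : A.IsHermitian) : Fin n → ℝ :=
  hA.eigenvalues ∘ Tuple.sort hA.eigenvalues

lemma Tuple.apply_sort_one_le {n : ℕ} {α : Type*} [LinearOrder α] (f : Fin (n + 2) → α)
    {i : Fin (n + 2)} (hi : i ≠ Tuple.sort f 0) : f (Tuple.sort f 1) ≤ f i := by
  have hk : (Tuple.sort f).symm i ≠ 0 := by
    rintro hk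
    exact hi (by rw [← hk, Equiv.apply_symm_apply])
  have h1 : (1 : Fin (n + 2)) ≤ (Tuple.sort f).symm i := Fin.one_le_of_ne_zero hk
  simpa using Tuple.monotone_sort f h1

lemma mul_one_sub_le_sum_mul_sub {ι : Type*} [Fintype ι] [DecidableEq ι] {μ p : ι → ℝ}
    {i₀ : ι} {δ : ℝ} (hp : ∀ i, 0 ≤ p i) (hsum : ∑ i, p i = 1) (hgap : ∀ i ≠ i₀, μ i₀ + δ ≤ μ i) :
    δ * (1 - p i₀) ≤ ∑ i, μ i * p i - μ i₀ := by
  have hleft : δ * (1 - p i₀) = ∑ i ∈ Finset.univ.erase i₀, δ * p i := by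
    rw [← Finset.mul_sum, Finset.sum_erase_eq_sub (Finset.mem_univ i₀), hsum]
  have hright : ∑ i, μ i * p i - μ i₀ = ∑ i ∈ Finset.univ.erase i₀, (μ i - μ i₀) * p i := by
    rw [Finset.sum_erase _ (by simp), Finset.sum_congr rfl fun i _ => sub_mul _ _ _,
      Finset.sum_sub_distrib, ← Finset.mul_sum, hsum, mul_one]
  rw [hleft, hright]
  refine Finset.sum_le_sum fun i hi => mul_le_mul_of_nonneg_right ?_ (hp i)
  linarith [hgap i (Finset.ne_of_mem_erase hi)]

lemma Matrix.PosSemidef.sq_apply_le {ι : Type*} [Fintype ι] {A : Matrix ι ι ℝ}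
    (hA : A.PosSemidef) (i j : ι) : A i j ^ 2 ≤ A i i * A j j := by
  have hdet := (hA.submatrix ![i, j]).det_nonneg
  have hsymm : A j i = A i j := by simpa using hA.1.apply i j
  rw [det_fin_two] at hdet
  simp only [submatrix_apply, Matrix.cons_val_zero, Matrix.cons_val_one, hsymm] at hdet
  nlinarith

lemma frobSq_le_trace_sq {n : ℕ} {A : Matrix (Fin n) (Fin n) ℝ} (hA : A.PosSemidef) :
    frobSq A ≤ A.trace ^ 2 := by
  calc frobSq A ≤ ∑ i, ∑ j, A i i * A j j :=
        Finset.sum_le_sum fun i _ => Finset.sum_le_sum fun j _ => hA.sq_apply_le i j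
    _ = A.trace ^ 2 := by rw [sq, trace, Finset.sum_mul_sum]; rfl

lemma frobSq_sub_vecMulVec {n : ℕ} (A : Matrix (Fin n) (Fin n) ℝ) {v : Fin n → ℝ}
    (hv : v ⬝ᵥ v = 1) :
    frobSq (A - vecMulVec v v) = frobSq A - 2 * (v ⬝ᵥ A *ᵥ v) + 1 := by
  have hvv : ∑ i, ∑ j, (v i * v j) ^ 2 = 1 := by
    simp_rw [mul_pow, ← Finset.sum_mul_sum, sq]
    rw [← dotProduct, hv, one_mul]
  simp only [frobSq, Matrix.sub_apply, vecMulVec_apply, sub_sq, Finset.sum_add_distrib,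
    Finset.sum_sub_distrib, hvv, dotProduct, mulVec, Finset.mul_sum]
  congr 2
  exact Finset.sum_congr rfl fun i _ => Finset.sum_congr rfl fun j _ => by ring

lemma frobSq_sub_vecMulVec_le {n : ℕ} {X : Matrix (Fin n) (Fin n) ℝ} (hX : X ∈ Spectra n)
    {v : Fin n → ℝ} (hv : v ⬝ᵥ v = 1) :
    frobSq (X - vecMulVec v v) ≤ 2 * (1 - v ⬝ᵥ X *ᵥ v) := by
  have hX_sq : frobSq X ≤ 1 := by simpa [hX.2] using frobSq_le_trace_sq hX.1
  rw [frobSq_sub_vecMulVec X hv]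
  linarith

lemma tinner_eq_trace {n : ℕ} (A B : Matrix (Fin n) (Fin n) ℝ) : tinner A B = (Aᵀ * B).trace := by
  simp only [tinner, trace, diag, mul_apply, transpose_apply]
  exact Finset.sum_comm

lemma tinner_sub_left {n : ℕ} (A B C : Matrix (Fin n) (Fin n) ℝ) :
    tinner (A - B) C = tinner A C - tinner B C := by
  simp only [tinner_eq_trace, transpose_sub, Matrix.sub_mul, trace_sub]

lemma tinner_vecMulVec_left {n : ℕ} (a b : Fin n → ℝ) (A : Matrix (Fin n) (Fin n) ℝ) :
    tinner (vecMulVec a b) A = a ⬝ᵥ A *ᵥ b := by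
  simp only [tinner, vecMulVec_apply, dotProduct, mulVec, Finset.mul_sum]
  exact Finset.sum_congr rfl fun i _ => Finset.sum_congr rfl fun j _ => by ring

lemma tinner_vecMulVec_right {n : ℕ} (A : Matrix (Fin n) (Fin n) ℝ) (a b : Fin n → ℝ) :
    tinner A (vecMulVec a b) = a ⬝ᵥ A *ᵥ b := by
  simp only [tinner, vecMulVec_apply, dotProduct, mulVec, Finset.mul_sum]
  exact Finset.sum_congr rfl fun i _ => Finset.sum_congr rfl fun j _ => by ring

lemma tinner_sum_right {n : ℕ} {ι : Type*} [Fintype ι] (A : Matrix (Fin n) (Fin n) ℝ)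
    (B : ι → Matrix (Fin n) (Fin n) ℝ) : tinner A (∑ i, B i) = ∑ i, tinner A (B i) := by
  simp only [tinner_eq_trace, Matrix.mul_sum, trace_sum]

lemma tinner_smul_right {n : ℕ} (A : Matrix (Fin n) (Fin n) ℝ) (c : ℝ)
    (B : Matrix (Fin n) (Fin n) ℝ) : tinner A (c • B) = c * tinner A B := by
  simp only [tinner_eq_trace, Matrix.mul_smul, trace_smul, smul_eq_mul]

lemma tinner_one_right {n : ℕ} (A : Matrix (Fin n) (Fin n) ℝ) : tinner A 1 = A.trace := by
  rw [tinner_eq_trace, Matrix.mul_one, trace_transpose]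

namespace Matrix.IsHermitian

variable {ι : Type*} [Fintype ι] [DecidableEq ι] {A : Matrix ι ι ℝ} (hA : A.IsHermitian)

lemma sum_vecMulVec_eigenvectorBasis :
    ∑ i, vecMulVec ⇑(hA.eigenvectorBasis i) ⇑(hA.eigenvectorBasis i) = 1 := by
  ext j k
  have h := congr_fun₂ (mem_unitaryGroup_iff.mp hA.eigenvectorUnitary.2) j k
  simpa [mul_apply, conjTranspose_apply, Matrix.sum_apply, vecMulVec_apply] using h

lemma eq_sum_eigenvalues_smul_vecMulVec :
    A = ∑ i, hA.eigenvalues i • vecMulVec ⇑(hA.eigenvectorBasis i) ⇑(hA.eigenvectorBasis i) := by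
  conv_lhs => rw [← A.mul_one, ← hA.sum_vecMulVec_eigenvectorBasis]
  simp only [Matrix.mul_sum, mul_vecMulVec, mulVec_eigenvectorBasis, smul_vecMulVec]

lemma eq_sum_dotProduct_smul_eigenvectorBasis (v : ι → ℝ) :
    v = ∑ i, (⇑(hA.eigenvectorBasis i) ⬝ᵥ v) • ⇑(hA.eigenvectorBasis i) := by
  conv_lhs => rw [← one_mulVec v, ← hA.sum_vecMulVec_eigenvectorBasis]
  simp only [sum_mulVec, vecMulVec_mulVec, op_smul_eq_smul]

lemma eigenvectorBasis_dotProduct_self (i : ι) :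
    ⇑(hA.eigenvectorBasis i) ⬝ᵥ ⇑(hA.eigenvectorBasis i) = 1 := by
  have h : inner ℝ (hA.eigenvectorBasis i) (hA.eigenvectorBasis i) = 1 := by
    rw [real_inner_self_eq_norm_sq, hA.eigenvectorBasis.orthonormal.1 i, one_pow]
  rwa [EuclideanSpace.inner_eq_star_dotProduct, star_trivial] at h

lemma eigenvectorBasis_dotProduct_eq_zero {v : ι → ℝ} {c : ℝ} (hv : A *ᵥ v = c • v) {i : ι}
    (hc : hA.eigenvalues i ≠ c) : ⇑(hA.eigenvectorBasis i) ⬝ᵥ v = 0 := by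
  set b := ⇑(hA.eigenvectorBasis i)
  have hsymm : Aᵀ = A := by rw [← conjTranspose_eq_transpose_of_trivial]; exact hA
  have h : (hA.eigenvalues i - c) * (b ⬝ᵥ v) = 0 := by
    calc (hA.eigenvalues i - c) * (b ⬝ᵥ v) = (A *ᵥ b) ⬝ᵥ v - b ⬝ᵥ (A *ᵥ v) := by
          rw [mulVec_eigenvectorBasis, hv, smul_dotProduct, dotProduct_smul, smul_eq_mul,
            smul_eq_mul, sub_mul]
      _ = 0 := by rw [dotProduct_mulVec, ← vecMul_transpose, hsymm, sub_self]
  exact (mul_eq_zero.mp h).resolve_left (sub_ne_zero.mpr hc)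

lemma vecMulVec_self_eq_of_mulVec_eq_eigenvalues {v : ι → ℝ} (hv : v ⬝ᵥ v = 1) {i₀ : ι}
    (hev : A *ᵥ v = hA.eigenvalues i₀ • v)
    (hsimple : ∀ i ≠ i₀, hA.eigenvalues i ≠ hA.eigenvalues i₀) :
    vecMulVec v v = vecMulVec ⇑(hA.eigenvectorBasis i₀) ⇑(hA.eigenvectorBasis i₀) := by
  set b := fun i => ⇑(hA.eigenvectorBasis i)
  obtain ⟨c, hc⟩ : ∃ c : ℝ, v = c • b i₀ := by
    refine ⟨b i₀ ⬝ᵥ v, ?_⟩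
    conv_lhs => rw [hA.eq_sum_dotProduct_smul_eigenvectorBasis v]
    refine Finset.sum_eq_single i₀ (fun i _ hi => ?_) (by simp)
    rw [hA.eigenvectorBasis_dotProduct_eq_zero hev (hsimple i hi), zero_smul]
  have hc2 : c * c = 1 := by
    rw [← hv, hc, smul_dotProduct, dotProduct_smul, hA.eigenvectorBasis_dotProduct_self,
      smul_eq_mul, smul_eq_mul, mul_one]
  rw [hc, smul_vecMulVec, vecMulVec_smul, smul_smul, hc2, one_smul]

end Matrix.IsHermitian

lemma Matrix.IsHermitian.tinner_eq_sum_eigenvalues_mul {n : ℕ} {G : Matrix (Fin n) (Fin n) ℝ}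
    (hG : G.IsHermitian) (X : Matrix (Fin n) (Fin n) ℝ) :
    tinner X G = ∑ i, hG.eigenvalues i *
      (⇑(hG.eigenvectorBasis i) ⬝ᵥ X *ᵥ ⇑(hG.eigenvectorBasis i)) := by
  conv_lhs => rw [hG.eq_sum_eigenvalues_smul_vecMulVec]
  simp only [tinner_sum_right, tinner_smul_right, tinner_vecMulVec_right]

lemma Matrix.IsHermitian.sum_eigenvectorBasis_dotProduct_mulVec {n : ℕ}
    {G : Matrix (Fin n) (Fin n) ℝ} (hG : G.IsHermitian) (X : Matrix (Fin n) (Fin n) ℝ) :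
    ∑ i, ⇑(hG.eigenvectorBasis i) ⬝ᵥ X *ᵥ ⇑(hG.eigenvectorBasis i) = X.trace := by
  rw [← tinner_one_right, ← hG.sum_vecMulVec_eigenvectorBasis, tinner_sum_right]
  simp only [tinner_vecMulVec_right]

/-- For `X ∈ S_n`, a symmetric `G` with bottom eigen-gap at least `δX > 0`,
and `v` a unit eigenvector of `G` for the smallest eigenvalue,
`⟨X − vvᵀ, G⟩ ≥ δX(1 − vᵀXv) ≥ (δX/2)‖X − vvᵀ‖_F²`. -/
theorem stmt3 {n : ℕ} (G X : Matrix (Fin (n+2)) (Fin (n+2)) ℝ)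
    (hG : G.IsHermitian) (hX : X ∈ Spectra (n+2))
    (δX : ℝ) (hδpos : 0 < δX)
    (hgap : δX ≤ sortedEigs hG 1 - sortedEigs hG 0)
    (v : Fin (n+2) → ℝ) (hv : ∑ i, (v i)^2 = 1)
    (hev : G *ᵥ v = sortedEigs hG 0 • v) :
    tinner (X - vecMulVec v v) G ≥ δX * (1 - v ⬝ᵥ (X *ᵥ v)) ∧
    δX * (1 - v ⬝ᵥ (X *ᵥ v)) ≥ (δX / 2) * frobSq (X - vecMulVec v v) := by
  set μ := hG.eigenvalues
  set b := fun i => ⇑(hG.eigenvectorBasis i)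
  set i₀ := Tuple.sort μ 0
  set p := fun i => b i ⬝ᵥ X *ᵥ b i
  have hv_unit : v ⬝ᵥ v = 1 := by simpa only [dotProduct, sq] using hv
  have hμ_gap : ∀ i ≠ i₀, μ i₀ + δX ≤ μ i := fun i hi => by
    have := Tuple.apply_sort_one_le μ hi
    simp only [sortedEigs, Function.comp_apply] at hgap
    linarith
  have hvv : vecMulVec v v = vecMulVec (b i₀) (b i₀) :=
    hG.vecMulVec_self_eq_of_mulVec_eq_eigenvalues hv_unit hev fun i hi =>
      ((lt_add_of_pos_right _ hδpos).trans_le (hμ_gap i hi)).ne'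
  have hvXv : v ⬝ᵥ X *ᵥ v = p i₀ := by
    rw [← tinner_vecMulVec_right, hvv, tinner_vecMulVec_right]
  have hvGv : tinner (vecMulVec v v) G = μ i₀ := by
    rw [tinner_vecMulVec_left, hev, dotProduct_smul, hv_unit, smul_eq_mul, mul_one]
    rfl
  constructor
  · rw [tinner_sub_left, hG.tinner_eq_sum_eigenvalues_mul, hvGv, hvXv]
    refine mul_one_sub_le_sum_mul_sub (fun i => ?_) ?_ hμ_gap
    · simpa only [star_trivial] using hX.1.dotProduct_mulVec_nonneg (b i)
    · rw [hG.sum_eigenvectorBasis_dotProduct_mulVec, hX.2]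
  · nlinarith [frobSq_sub_vecMulVec_le hX hv_unit]
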